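/- Let g be a cusp form of even weight ω for SL₂(ℤ) with Fourier expansion g(y) = Σ_{m≥1} A_m e^{2πimy}, and define f(y) := (1/2)·g(−1/y) + Σ_{m≥1} A_m e₁(−m/y) for y ∈ ℍ with Re(y) ≠ 0, assuming the series Σ_{m≥1} A_m e₁(−m/y) and Σ_{m≥1} A_m e₁(my) converge locally uniformly on ℂ∖i[0,∞). Then the weight −ω cocycle of f for the generator S = (0 −1; 1 0) satisfies, for all y ∈ ℍ with Re(y) ≠ 0, h_S[f](y) := y^ω·f(−1/y) − f(y) = y^ω·Σ_{m≥1} A_m e₁(my) − Σ_{m≥1} A_m e₁(−m/y) (the g-terms cancelling by the modularity g(−1/y) = y^ω g(y)); in particular, h_S[f] extends to a holomorphic function on ℂ∖i[0,∞). -/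

import Mathlib

noncomputable section

open Complex Filter Topology

/-- `e₁(z) = (1/2πi) ∫₀^∞ e^{-2πt}/(t + iz) dt`. -/
def e1 (z : ℂ) : ℂ :=
  1 / (2 * Real.pi * I) *
    ∫ t in Set.Ioi (0 : ℝ), Complex.exp (-2 * Real.pi * t) / ((t : ℂ) + I * z)

/-- `f(y) = (1/2)·g(-1/y) + Σ_{m≥1} A_m e₁(-m/y)`. -/
def modifiedCusp (g : ℂ → ℂ) (A : ℕ → ℂ) (y : ℂ) : ℂ :=
  1 / 2 * g (-1 / y) + ∑' m : ℕ, A (m + 1) * e1 (-((m : ℂ) + 1) / y)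


/-! The `g`-terms cancel by modularity under `S`, and `-m / (-1/y) = m y` turns the series of
`f(-1/y)` into `Σ A_m e₁(m y)`. For holomorphy, `e₁(z)` is `∫₀^∞ e^{-2πt} / (t + w) dt` at `w = iz`
(up to a constant); this is holomorphic on the slit plane `ℂ ∖ (-∞, 0]`, because there the
denominator stays locally bounded away from `0` and one may differentiate under the integral.
The condition `iz ∉ (-∞, 0]` describes exactly `ℂ ∖ i[0, ∞)`, which both `y ↦ m y` and
`y ↦ -m / y` preserve, and locally uniform limits of holomorphic functions are holomorphic. -/

open MeasureTheory Metric Set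

namespace Complex

lemma ofReal_mul_mem_slitPlane {c : ℝ} (hc : 0 < c) {z : ℂ} (hz : z ∈ slitPlane) :
    (c : ℂ) * z ∈ slitPlane := by
  rw [mem_slitPlane_iff] at hz ⊢
  simp only [re_ofReal_mul, im_ofReal_mul]
  exact hz.imp (mul_pos hc) (mul_ne_zero hc.ne')

lemma inv_mem_slitPlane {z : ℂ} (hz : z ∈ slitPlane) : z⁻¹ ∈ slitPlane := by
  have hn : 0 < normSq z := normSq_pos.2 (slitPlane_ne_zero hz)
  rw [mem_slitPlane_iff] at hz ⊢
  simp only [inv_re, inv_im]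
  exact hz.imp (div_pos · hn) fun h => div_ne_zero (neg_ne_zero.2 h) hn.ne'

lemma half_le_norm_ofReal_add {w₀ w : ℂ} {ε t : ℝ} (hε : ball w₀ ε ⊆ slitPlane)
    (hw : w ∈ ball w₀ (ε / 2)) (ht : 0 ≤ t) : ε / 2 ≤ ‖(t : ℂ) + w‖ := by
  by_contra! h
  have hdist : dist w (-(t : ℂ)) = ‖(t : ℂ) + w‖ := by
    rw [dist_eq_norm, sub_neg_eq_add, add_comm]
  have hmem : -(t : ℂ) ∈ ball w₀ ε := by
    rw [mem_ball] at hw ⊢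
    linarith [dist_triangle_left (-(t : ℂ)) w₀ w]
  exact (neg_ofReal_mem_slitPlane.1 (hε hmem)).not_ge ht

theorem differentiableOn_integral_div_ofReal_add {φ : ℝ → ℂ} (hφ : IntegrableOn φ (Ioi 0)) :
    DifferentiableOn ℂ (fun w => ∫ t in Ioi (0 : ℝ), φ t / ((t : ℂ) + w)) slitPlane := by
  intro w₀ hw₀
  obtain ⟨ε, hε, hball⟩ := isOpen_iff.1 isOpen_slitPlane w₀ hw₀
  have hε2 : 0 < ε / 2 := half_pos hε
  have hlow : ∀ w ∈ ball w₀ (ε / 2), ∀ t ∈ Ioi (0 : ℝ), ε / 2 ≤ ‖(t : ℂ) + w‖ :=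
    fun w hw t ht => half_le_norm_ofReal_add hball hw (le_of_lt ht)
  have hne : ∀ w ∈ ball w₀ (ε / 2), ∀ t ∈ Ioi (0 : ℝ), (t : ℂ) + w ≠ 0 :=
    fun w hw t ht => norm_pos_iff.1 (hε2.trans_le (hlow w hw t ht))
  have hmeas : ∀ w : ℂ, AEStronglyMeasurable (fun t : ℝ => φ t / ((t : ℂ) + w))
      (volume.restrict (Ioi 0)) := fun w => by
    simp_rw [div_eq_mul_inv]
    exact hφ.aestronglyMeasurable.mul (by fun_prop)
  have hmeas' : AEStronglyMeasurable (fun t : ℝ => -φ t / ((t : ℂ) + w₀) ^ 2)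
      (volume.restrict (Ioi 0)) := by
    simp_rw [div_eq_mul_inv]
    exact hφ.aestronglyMeasurable.neg.mul (by fun_prop)
  have hint : Integrable (fun t : ℝ => φ t / ((t : ℂ) + w₀)) (volume.restrict (Ioi 0)) := by
    refine (hφ.norm.div_const (ε / 2)).mono' (hmeas w₀) ?_
    filter_upwards [ae_restrict_mem measurableSet_Ioi] with t ht
    rw [norm_div]
    exact div_le_div_of_nonneg_left (norm_nonneg _) hε2 (hlow w₀ (mem_ball_self hε2) t ht)
  have hbound : ∀ᵐ t ∂(volume.restrict (Ioi 0)), ∀ w ∈ ball w₀ (ε / 2),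
      ‖-φ t / ((t : ℂ) + w) ^ 2‖ ≤ ‖φ t‖ / (ε / 2) ^ 2 := by
    filter_upwards [ae_restrict_mem measurableSet_Ioi] with t ht w hw
    rw [norm_div, norm_neg, norm_pow]
    exact div_le_div_of_nonneg_left (norm_nonneg _) (by positivity)
      (pow_le_pow_left₀ hε2.le (hlow w hw t ht) 2)
  have hderiv : ∀ᵐ t ∂(volume.restrict (Ioi 0)), ∀ w ∈ ball w₀ (ε / 2),
      HasDerivAt (fun w => φ t / ((t : ℂ) + w)) (-φ t / ((t : ℂ) + w) ^ 2) w := by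
    filter_upwards [ae_restrict_mem measurableSet_Ioi] with t ht w hw
    have h := (hasDerivAt_const w (φ t)).fun_div ((hasDerivAt_id' w).const_add (t : ℂ))
      (hne w hw t ht)
    rwa [zero_mul, zero_sub, mul_one] at h
  exact (hasDerivAt_integral_of_dominated_loc_of_deriv_le (ball_mem_nhds w₀ hε2)
    (.of_forall hmeas) hint hmeas' hbound (hφ.norm.div_const _) hderiv).2.differentiableAt
    |>.differentiableWithinAt

lemma setOf_not_re_eq_zero_and_im_nonneg :
    {y : ℂ | ¬(y.re = 0 ∧ 0 ≤ y.im)} = {y | I * y ∈ slitPlane} := by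
  ext y
  simp only [mem_ofPred_eq, mem_slitPlane_iff, I_mul_re, I_mul_im, not_and_or, not_le,
    neg_pos]
  tauto

lemma I_mul_ofReal_mul_mem_slitPlane {c : ℝ} (hc : 0 < c) {z : ℂ} (hz : I * z ∈ slitPlane) :
    I * (c * z) ∈ slitPlane := by
  rw [mul_left_comm]
  exact ofReal_mul_mem_slitPlane hc hz

lemma I_mul_neg_ofReal_div_mem_slitPlane {c : ℝ} (hc : 0 < c) {z : ℂ}
    (hz : I * z ∈ slitPlane) : I * (-c / z) ∈ slitPlane := by
  have h : I * (-c / z) = c * (I * z)⁻¹ := by rw [mul_inv, inv_I]; ring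
  rw [h]
  exact ofReal_mul_mem_slitPlane hc (inv_mem_slitPlane hz)

end Complex

theorem differentiableOn_e1 : DifferentiableOn ℂ e1 {z | I * z ∈ slitPlane} := by
  have hexp : IntegrableOn (fun t : ℝ => Complex.exp (-2 * Real.pi * t)) (Ioi 0) :=
    integrableOn_exp_mul_complex_Ioi (by simp [Real.pi_pos]) 0
  exact ((differentiableOn_integral_div_ofReal_add hexp).comp
    ((differentiableOn_const I).mul differentiableOn_id) fun _ hz => hz).const_mul _

lemma differentiableOn_e1_ofReal_mul {c : ℝ} (hc : 0 < c) :
    DifferentiableOn ℂ (fun z => e1 (c * z)) {z | I * z ∈ slitPlane} :=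
  differentiableOn_e1.comp ((differentiableOn_const _).mul differentiableOn_id)
    fun _ hz => I_mul_ofReal_mul_mem_slitPlane hc hz

lemma differentiableOn_e1_neg_ofReal_div {c : ℝ} (hc : 0 < c) :
    DifferentiableOn ℂ (fun z => e1 (-c / z)) {z | I * z ∈ slitPlane} :=
  differentiableOn_e1.comp ((differentiableOn_const _).div differentiableOn_id
    fun _ hz => by rintro rfl; simp [zero_notMem_slitPlane] at hz)
    fun _ hz => I_mul_neg_ofReal_div_mem_slitPlane hc hz

lemma modifiedCusp_neg_one_div (g : ℂ → ℂ) (A : ℕ → ℂ) {y : ℂ} (hy : y ≠ 0) :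
    modifiedCusp g A (-1 / y) = 1 / 2 * g y + ∑' m : ℕ, A (m + 1) * e1 (((m : ℂ) + 1) * y) := by
  have hinv : -1 / (-1 / y) = y := by field_simp
  have hterm (m : ℕ) : -((m : ℂ) + 1) / (-1 / y) = ((m : ℂ) + 1) * y := by field_simp
  simp only [modifiedCusp, hinv, hterm]

theorem stmt17_general (ω : ℕ)
    (g : ℂ → ℂ) (A : ℕ → ℂ)
    (hmod : ∀ a b c d : ℤ, a * d - b * c = 1 → ∀ y : ℂ, 0 < y.im →
      g (((a : ℂ) * y + b) / ((c : ℂ) * y + d)) = ((c : ℂ) * y + d) ^ ω * g y)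
    -- local uniform convergence of both e₁-series on the cut plane ℂ∖i[0,∞)
    (hconv1 : TendstoLocallyUniformlyOn
      (fun (N : ℕ) (y : ℂ) => ∑ m ∈ Finset.range N, A (m + 1) * e1 (-((m : ℂ) + 1) / y))
      (fun y : ℂ => ∑' m : ℕ, A (m + 1) * e1 (-((m : ℂ) + 1) / y))
      atTop {y : ℂ | ¬(y.re = 0 ∧ 0 ≤ y.im)})
    (hconv2 : TendstoLocallyUniformlyOn
      (fun (N : ℕ) (y : ℂ) => ∑ m ∈ Finset.range N, A (m + 1) * e1 (((m : ℂ) + 1) * y))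
      (fun y : ℂ => ∑' m : ℕ, A (m + 1) * e1 (((m : ℂ) + 1) * y))
      atTop {y : ℂ | ¬(y.re = 0 ∧ 0 ≤ y.im)}) :
    -- the cocycle identity on ℍ off the imaginary axis
    (∀ y : ℂ, 0 < y.im → y.re ≠ 0 →
      y ^ ω * modifiedCusp g A (-1 / y) - modifiedCusp g A y
        = y ^ ω * ∑' m : ℕ, A (m + 1) * e1 (((m : ℂ) + 1) * y)
            - ∑' m : ℕ, A (m + 1) * e1 (-((m : ℂ) + 1) / y)) ∧
    -- the right-hand side is holomorphic on ℂ∖i[0,∞)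
    DifferentiableOn ℂ
      (fun y : ℂ => y ^ ω * ∑' m : ℕ, A (m + 1) * e1 (((m : ℂ) + 1) * y)
          - ∑' m : ℕ, A (m + 1) * e1 (-((m : ℂ) + 1) / y))
      {y : ℂ | ¬(y.re = 0 ∧ 0 ≤ y.im)} := by
  refine ⟨fun y hy _ => ?_, ?_⟩
  · have hS : g (-1 / y) = y ^ ω * g y := by simpa using hmod 0 (-1) 1 0 (by norm_num) y hy
    rw [modifiedCusp_neg_one_div g A (fun h => by simp [h] at hy), modifiedCusp, hS]
    ring
  rw [setOf_not_re_eq_zero_and_im_nonneg] at hconv1 hconv2 ⊢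
  have hU : IsOpen {y : ℂ | I * y ∈ slitPlane} := isOpen_slitPlane.preimage (continuous_const_mul I)
  have hterm1 (m : ℕ) : DifferentiableOn ℂ (fun y => A (m + 1) * e1 (-((m : ℂ) + 1) / y))
      {y | I * y ∈ slitPlane} := by
    simpa using (differentiableOn_e1_neg_ofReal_div (c := m + 1) (by positivity)).const_mul _
  have hterm2 (m : ℕ) : DifferentiableOn ℂ (fun y => A (m + 1) * e1 (((m : ℂ) + 1) * y))
      {y | I * y ∈ slitPlane} := by
    simpa using (differentiableOn_e1_ofReal_mul (c := m + 1) (by positivity)).const_mul _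
  have hsum1 := hconv1.differentiableOn (.of_forall fun N => .fun_sum fun m _ => hterm1 m) hU
  have hsum2 := hconv2.differentiableOn (.of_forall fun N => .fun_sum fun m _ => hterm2 m) hU
  exact ((differentiable_pow ω).differentiableOn.mul hsum2).sub hsum1

/-- The weight `-ω` cocycle of `f` for `S = (0 -1; 1 0)` is
`h_S[f](y) = y^ω f(-1/y) - f(y) = y^ω Σ_m A_m e₁(my) - Σ_m A_m e₁(-m/y)` (the `g`-terms
cancel by modularity), and it extends to a holomorphic function on `ℂ∖i[0,∞)`. -/
theorem stmt17 (ω : ℕ) (hω : Even ω)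
    (g : ℂ → ℂ) (A : ℕ → ℂ)
    (hghol : DifferentiableOn ℂ g {y : ℂ | 0 < y.im})
    (hmod : ∀ a b c d : ℤ, a * d - b * c = 1 → ∀ y : ℂ, 0 < y.im →
      g (((a : ℂ) * y + b) / ((c : ℂ) * y + d)) = ((c : ℂ) * y + d) ^ ω * g y)
    (hfour : ∀ y : ℂ, 0 < y.im →
      g y = ∑' m : ℕ, A (m + 1) * Complex.exp (2 * Real.pi * I * ((m : ℂ) + 1) * y))
    (C : ℝ) (hC : 0 < C) (hA : ∀ m : ℕ, 1 ≤ m → ‖A m‖ ≤ C * (m : ℝ) ^ ω)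
    -- local uniform convergence of both e₁-series on the cut plane ℂ∖i[0,∞)
    (hconv1 : TendstoLocallyUniformlyOn
      (fun (N : ℕ) (y : ℂ) => ∑ m ∈ Finset.range N, A (m + 1) * e1 (-((m : ℂ) + 1) / y))
      (fun y : ℂ => ∑' m : ℕ, A (m + 1) * e1 (-((m : ℂ) + 1) / y))
      atTop {y : ℂ | ¬(y.re = 0 ∧ 0 ≤ y.im)})
    (hconv2 : TendstoLocallyUniformlyOn
      (fun (N : ℕ) (y : ℂ) => ∑ m ∈ Finset.range N, A (m + 1) * e1 (((m : ℂ) + 1) * y))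
      (fun y : ℂ => ∑' m : ℕ, A (m + 1) * e1 (((m : ℂ) + 1) * y))
      atTop {y : ℂ | ¬(y.re = 0 ∧ 0 ≤ y.im)}) :
    -- the cocycle identity on ℍ off the imaginary axis
    (∀ y : ℂ, 0 < y.im → y.re ≠ 0 →
      y ^ ω * modifiedCusp g A (-1 / y) - modifiedCusp g A y
        = y ^ ω * ∑' m : ℕ, A (m + 1) * e1 (((m : ℂ) + 1) * y)
            - ∑' m : ℕ, A (m + 1) * e1 (-((m : ℂ) + 1) / y)) ∧
    -- the right-hand side is holomorphic on ℂ∖i[0,∞)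
    DifferentiableOn ℂ
      (fun y : ℂ => y ^ ω * ∑' m : ℕ, A (m + 1) * e1 (((m : ℂ) + 1) * y)
          - ∑' m : ℕ, A (m + 1) * e1 (-((m : ℂ) + 1) / y))
      {y : ℂ | ¬(y.re = 0 ∧ 0 ≤ y.im)} :=
  stmt17_general ω g A hmod hconv1 hconv2
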